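/- Define recursively Q̂₀(x) = g(x) and Q̂ₖ(x) = Q̂ₖ₋₁'(x) − (k−2)f(x)Q̂ₖ₋₁(x), where f, g are real analytic near 0. Then for the function g̃ defined via u = φ(x) = ∫₀ˣ e^{F} (F = ∫₀ˣ f) by g̃(u) = g(x)e^{F(x)}, the k-th derivative satisfies g̃^{(k)}(u) = Q̂ₖ(x)·e^{(1−k)F(x)} for all k ≥ 0. -/

import Mathlib

open Filter Topology intervalIntegral
open scoped ContDiff

/-!
Under the substitution `u = φ x` one has `d/du = exp (-F x) • d/dx`, so if
`P x = h (φ x) * exp (c * F x)` then `P' - c f P = h' (φ x) * exp ((c + 1) * F x)`.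
The recursion for `Q̂ₖ` is this identity with `c = k - 1`, so by induction
`Q̂ₖ x = g̃⁽ᵏ⁾ (φ x) * exp ((k - 1) * F x)`, starting from `Q̂₀ = g = g̃ ∘ φ * exp (-F)`.
The function `g̃` is smooth near `φ 0` by the inverse function theorem, as `φ' 0 = exp (F 0) ≠ 0`.
-/

section Antiderivative

variable {E : Type*} [NormedAddCommGroup E] [NormedSpace ℝ E] [CompleteSpace E]
  {f : ℝ → E} {U : Set ℝ} {a : ℝ}

theorem hasDerivAt_integral_of_continuousOn (hU : IsOpen U) (hU' : U.OrdConnected)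
    (hf : ContinuousOn f U) (ha : a ∈ U) {x : ℝ} (hx : x ∈ U) :
    HasDerivAt (fun y => ∫ t in a..y, f t) (f x) x :=
  integral_hasDerivAt_right ((hf.mono (hU'.uIcc_subset ha hx)).intervalIntegrable)
    (hf.stronglyMeasurableAtFilter hU x hx) (hf.continuousAt (hU.mem_nhds hx))

theorem contDiffOn_integral_of_contDiffOn {n : ℕ∞} (hU : IsOpen U) (hU' : U.OrdConnected)
    (hf : ContDiffOn ℝ n f U) (ha : a ∈ U) :
    ContDiffOn ℝ (n + 1) (fun y => ∫ t in a..y, f t) U := by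
  have hderiv := fun x (hx : x ∈ U) =>
    hasDerivAt_integral_of_continuousOn hU hU' hf.continuousOn ha hx
  rw [contDiffOn_succ_iff_deriv_of_isOpen hU]
  refine ⟨fun x hx => (hderiv x hx).differentiableAt.differentiableWithinAt, by simp, ?_⟩
  exact hf.congr fun x hx => (hderiv x hx).deriv

theorem eventually_hasDerivAt_integral (hf : ∀ᶠ x in 𝓝 a, ContinuousAt f x) :
    ∀ᶠ x in 𝓝 a, HasDerivAt (fun y => ∫ t in a..y, f t) (f x) x := by
  obtain ⟨r, hr, hfr⟩ := Metric.eventually_nhds_iff_ball.mp hf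
  filter_upwards [Metric.ball_mem_nhds a hr] with x hx
  exact hasDerivAt_integral_of_continuousOn Metric.isOpen_ball (convex_ball a r).ordConnected
    (fun y hy => (hfr y hy).continuousWithinAt) (Metric.mem_ball_self hr) hx

theorem eventually_contDiffAt_integral {n : ℕ∞} (hf : ∀ᶠ x in 𝓝 a, ContDiffAt ℝ n f x) :
    ∀ᶠ x in 𝓝 a, ContDiffAt ℝ (n + 1) (fun y => ∫ t in a..y, f t) x := by
  obtain ⟨r, hr, hfr⟩ := Metric.eventually_nhds_iff_ball.mp hf
  filter_upwards [Metric.ball_mem_nhds a hr] with x hx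
  exact (contDiffOn_integral_of_contDiffOn Metric.isOpen_ball (convex_ball a r).ordConnected
    (fun y hy => (hfr y hy).contDiffWithinAt) (Metric.mem_ball_self hr)).contDiffAt
    (Metric.isOpen_ball.mem_nhds hx)

end Antiderivative

theorem ContDiffAt.differentiableAt_iteratedDeriv {𝕜 : Type*} [NontriviallyNormedField 𝕜]
    {F : Type*} [NormedAddCommGroup F] [NormedSpace 𝕜 F] {f : 𝕜 → F} {x : 𝕜} {n : WithTop ℕ∞}
    {m : ℕ} (h : ContDiffAt 𝕜 n f x) (hmn : m < n) :
    DifferentiableAt 𝕜 (iteratedDeriv m f) x := by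
  rw [iteratedDeriv_eq_equiv_comp]
  exact (ContinuousMultilinearMap.piFieldEquiv 𝕜 (Fin m) F).symm.differentiableAt.comp x
    (h.differentiableAt_iteratedFDeriv hmn)

theorem contDiffAt_comp_iff_of_deriv_ne_zero {𝕜 : Type*} [RCLike 𝕜]
    {E : Type*} [NormedAddCommGroup E] [NormedSpace 𝕜 E] {n : WithTop ℕ∞}
    {f : 𝕜 → 𝕜} {g : 𝕜 → E} {x : 𝕜} (hf : ContDiffAt 𝕜 n f x) (hn : n ≠ 0)
    (hf' : deriv f x ≠ 0) :
    ContDiffAt 𝕜 n (g ∘ f) x ↔ ContDiffAt 𝕜 n g (f x) := by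
  refine ⟨fun hg => ?_, fun hg => hg.comp x hf⟩
  let i : 𝕜 ≃L[𝕜] 𝕜 := .unitsEquivAut 𝕜 (.mk0 _ hf')
  have hfd : HasFDerivAt f (i : 𝕜 →L[𝕜] 𝕜) x :=
    (hf.differentiableAt hn).hasDerivAt.hasFDerivAt.congr_fderiv (by ext; simp [i])
  have hr := hf.to_localInverse hfd hn
  rw [← hf.localInverse_apply_image hfd hn] at hg
  refine (hg.comp _ hr).congr_of_eventuallyEq ?_
  filter_upwards [(hf.hasStrictFDerivAt' hfd hn).eventually_right_inverse] with y hy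
  simp only [Function.comp_apply, ContDiffAt.localInverse, hy]

open Real in
theorem eventuallyEq_deriv_sub_mul_of_eventuallyEq_comp_mul_exp {f F φ h P : ℝ → ℝ} {a c : ℝ}
    (hF : ∀ᶠ x in 𝓝 a, HasDerivAt F (f x) x)
    (hφ : ∀ᶠ x in 𝓝 a, HasDerivAt φ (exp (F x)) x)
    (hh : ∀ᶠ x in 𝓝 a, DifferentiableAt ℝ h (φ x))
    (hP : P =ᶠ[𝓝 a] fun x => h (φ x) * exp (c * F x)) :
    (fun x => deriv P x - c * f x * P x) =ᶠ[𝓝 a]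
      fun x => deriv h (φ x) * exp ((c + 1) * F x) := by
  filter_upwards [hP.deriv, hP, hF, hφ, hh] with x hPx' hPx hFx hφx hhx
  have hdiff : HasDerivAt (fun y => h (φ y) * exp (c * F y))
      (deriv h (φ x) * exp (F x) * exp (c * F x) + h (φ x) * (exp (c * F x) * (c * f x))) x :=
    (hhx.hasDerivAt.comp x hφx).mul (hFx.const_mul c).exp
  rw [hPx', hPx, hdiff.deriv, add_mul, one_mul, exp_add]
  ring

open Real in
theorem eventuallyEq_iteratedDeriv_comp_mul_exp {f F φ h : ℝ → ℝ} {Q : ℕ → ℝ → ℝ} {a : ℝ}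
    (hF : ∀ᶠ x in 𝓝 a, HasDerivAt F (f x) x)
    (hφ : ∀ᶠ x in 𝓝 a, HasDerivAt φ (exp (F x)) x)
    (hh : ContDiffAt ℝ ∞ h (φ a)) (hφa : ContinuousAt φ a)
    (hQ0 : Q 0 =ᶠ[𝓝 a] fun x => h (φ x) * exp (-F x))
    (hQ : ∀ k x, Q (k + 1) x = deriv (Q k) x - ((k : ℝ) - 1) * f x * Q k x) (k : ℕ) :
    Q k =ᶠ[𝓝 a] fun x => iteratedDeriv k h (φ x) * exp (((k : ℝ) - 1) * F x) := by
  induction k with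
  | zero => simpa using hQ0
  | succ k ih =>
    have hdiff : ∀ᶠ x in 𝓝 a, DifferentiableAt ℝ (iteratedDeriv k h) (φ x) :=
      hφa.eventually <| ((hh.of_le (m := k + 1) (by exact_mod_cast le_top)).eventually
        (by simp)).mono fun y hy => hy.differentiableAt_iteratedDeriv (by norm_cast; omega)
    rw [funext (hQ k), iteratedDeriv_succ]
    push_cast
    convert eventuallyEq_deriv_sub_mul_of_eventuallyEq_comp_mul_exp hF hφ hdiff ih using 4
    ring

/-- with `Q̂₀ = g`, `Q̂ₖ = Q̂ₖ₋₁' - (k-2)·f·Q̂ₖ₋₁`, and `g̃ (φ x) = g x * exp (F x)`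
where `φ x = ∫₀ˣ exp F`, `F x = ∫₀ˣ f`, one has
`g̃⁽ᵏ⁾ (φ x) = Q̂ₖ x * exp ((1-k) F x)` for all `k` and `x` near `0`. -/
theorem stmt8 (f g F φ gt : ℝ → ℝ)
    (hf : AnalyticAt ℝ f 0) (hg : AnalyticAt ℝ g 0)
    (hF : ∀ x, F x = ∫ s in (0:ℝ)..x, f s)
    (hφ : ∀ x, φ x = ∫ s in (0:ℝ)..x, Real.exp (F s))
    (hgt : ∀ᶠ x in nhds 0, gt (φ x) = g x * Real.exp (F x))
    (Q : ℕ → ℝ → ℝ) (hQ0 : ∀ x, Q 0 x = g x)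
    (hQk : ∀ (k : ℕ) (x : ℝ), Q (k+1) x =
      deriv (Q k) x - (((k:ℝ)+1) - 2) * f x * Q k x) :
    ∀ k : ℕ, ∀ᶠ x in nhds 0,
      iteratedDeriv k gt (φ x) = Q k x * Real.exp ((1 - (k:ℝ)) * F x) := by
  have hFd : ∀ᶠ x in 𝓝 0, HasDerivAt F (f x) x :=
    funext hF ▸ eventually_hasDerivAt_integral (hf.eventually_analyticAt.mono
      fun _ hx => hx.continuousAt)
  have hFs : ∀ᶠ x in 𝓝 0, ContDiffAt ℝ ∞ F x :=
    funext hF ▸ eventually_contDiffAt_integral (n := ⊤) (hf.eventually_analyticAt.mono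
      fun _ hx => hx.contDiffAt)
  have hexpF : ∀ᶠ x in 𝓝 0, ContDiffAt ℝ ∞ (fun y => Real.exp (F y)) x :=
    hFs.mono fun x hx => Real.contDiff_exp.contDiffAt.comp x hx
  have hφd : ∀ᶠ x in 𝓝 0, HasDerivAt φ (Real.exp (F x)) x :=
    funext hφ ▸ eventually_hasDerivAt_integral (hexpF.mono fun _ hx => hx.continuousAt)
  have hφs : ∀ᶠ x in 𝓝 0, ContDiffAt ℝ ∞ φ x :=
    funext hφ ▸ eventually_contDiffAt_integral (n := ⊤) hexpF
  have hgts : ContDiffAt ℝ ∞ gt (φ 0) := by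
    rw [← contDiffAt_comp_iff_of_deriv_ne_zero hφs.self_of_nhds (by simp)
      (hφd.self_of_nhds.deriv ▸ Real.exp_ne_zero _)]
    exact (hg.contDiffAt.mul hexpF.self_of_nhds).congr_of_eventuallyEq hgt
  have hQ0' : Q 0 =ᶠ[𝓝 0] fun x => gt (φ x) * Real.exp (-F x) := by
    filter_upwards [hgt] with x hx
    rw [hQ0, hx, mul_assoc, ← Real.exp_add, add_neg_cancel, Real.exp_zero, mul_one]
  intro k
  filter_upwards [eventuallyEq_iteratedDeriv_comp_mul_exp hFd hφd hgts
    hφs.self_of_nhds.continuousAt hQ0' (fun k x => by rw [hQk]; ring) k] with x hx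
  rw [hx, mul_assoc, ← Real.exp_add]
  ring_nf
  simp
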